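/- arXiv:1105.5600 — 3 statements merged into one kernel-verified Lean document; each statement's English description precedes it below -/
import Mathlib

section
/- For any nonnegative multiindex ν, exponent p > 0, and parameters α, m > 0, one has ∫_{ℂⁿ} |z^ν|^p e^{-α|z|^{2m}} dz = (πⁿ/m) · (∏ⱼ Γ(νⱼp/2 + 1)) / Γ(n + |ν|p/2) · Γ((|ν|p + 2n)/(2m)) / α^{(|ν|p+2n)/(2m)}, where |ν| = ν₁+⋯+νₙ and dz is Lebesgue measure on ℂⁿ ≅ ℝ^{2n}. -/
/-!
Both `G(z) = |z^ν|^p` and `|z|` are positively homogeneous, of degrees `|ν|p` and `1`. Writing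
`e^{-β r^c} = ∫_r^∞ w` with `w = -(d/dt) e^{-β t^c}` (a Weibull density) and swapping the
integrals gives `∫ G(z) e^{-β|z|^c} dz = ∫_0^∞ w(t) ∫_{|z|<t} G dt`, and by homogeneity the
inner integral is `t^{|ν|p+2n} V` with `V = ∫_{|z|<1} G`. The remaining radial integral is
a Gamma integral, so `∫ |z^ν|^p e^{-β|z|^c} = V β^{-k/c} Γ(k/c + 1)` with `k = |ν|p + 2n`.
For the Gaussian (`β = 1`, `c = 2`) the left side factorises over the coordinates, which
determines `V`.
-/

open MeasureTheory

/-- Euclidean norm on `ℂⁿ = Fin n → ℂ`. -/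
noncomputable def eNorm {n : ℕ} (z : Fin n → ℂ) : ℝ :=
  Real.sqrt (∑ j, ‖z j‖ ^ 2)

open Set Real Module Filter Topology
open scoped ENNReal

noncomputable def weibullPDF (β c t : ℝ) : ℝ := β * c * t ^ (c - 1) * exp (-β * t ^ c)

lemma hasDerivAt_neg_exp_neg_mul_rpow {β c t : ℝ} (ht : 0 < t) :
    HasDerivAt (fun s => -exp (-β * s ^ c)) (weibullPDF β c t) t := by
  refine (((hasDerivAt_rpow_const (Or.inl ht.ne')).const_mul (-β)).exp.fun_neg).congr_deriv ?_
  rw [weibullPDF]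
  ring

lemma weibullPDF_nonneg {β c t : ℝ} (hβ : 0 ≤ β) (hc : 0 ≤ c) (ht : 0 ≤ t) :
    0 ≤ weibullPDF β c t := by
  unfold weibullPDF
  have := rpow_nonneg ht (c - 1)
  positivity

lemma lintegral_Ioi_weibullPDF {β c r : ℝ} (hβ : 0 < β) (hc : 0 < c) (hr : 0 ≤ r) :
    ∫⁻ t in Ioi r, ENNReal.ofReal (weibullPDF β c t) = ENNReal.ofReal (exp (-β * r ^ c)) := by
  have hcont : ContinuousWithinAt (fun s => -exp (-β * s ^ c)) (Ici r) r :=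
    ((continuousAt_rpow_const r c (Or.inr hc.le)).const_mul (-β)).rexp.neg.continuousWithinAt
  have hderiv : ∀ t ∈ Ioi r, HasDerivAt (fun s => -exp (-β * s ^ c)) (weibullPDF β c t) t :=
    fun t ht => hasDerivAt_neg_exp_neg_mul_rpow (hr.trans_lt ht)
  have hpos : ∀ t ∈ Ioi r, 0 ≤ weibullPDF β c t :=
    fun t ht => weibullPDF_nonneg hβ.le hc.le (hr.trans ht.out.le)
  have hlim : Tendsto (fun s => -exp (-β * s ^ c)) atTop (𝓝 (-0)) :=
    (tendsto_exp_atBot.comp ((tendsto_rpow_atTop hc).const_mul_atTop_of_neg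
      (neg_lt_zero.2 hβ))).neg
  rw [← ofReal_integral_eq_lintegral_ofReal
    (integrableOn_Ioi_deriv_of_nonneg hcont hderiv hpos hlim)
    ((ae_restrict_iff' measurableSet_Ioi).2 (ae_of_all _ hpos)),
    integral_Ioi_of_hasDerivAt_of_nonneg hcont hderiv hpos hlim]
  ring_nf

lemma lintegral_Ioi_weibullPDF_mul_rpow {β c k : ℝ} (hβ : 0 < β) (hc : 0 < c) (hk : -c < k) :
    ∫⁻ t in Ioi 0, ENNReal.ofReal (weibullPDF β c t) * ENNReal.ofReal (t ^ k)
      = ENNReal.ofReal (β ^ (-(k / c)) * Gamma (k / c + 1)) := by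
  have heq : ∀ t ∈ Ioi (0 : ℝ), ENNReal.ofReal (weibullPDF β c t) * ENNReal.ofReal (t ^ k)
      = ENNReal.ofReal (β * c * (t ^ (c - 1 + k) * exp (-β * t ^ c))) := by
    intro t ht
    rw [← ENNReal.ofReal_mul (weibullPDF_nonneg hβ.le hc.le ht.out.le), weibullPDF,
      rpow_add ht.out]
    ring_nf
  have hint := (integrableOn_rpow_mul_exp_neg_mul_rpow (s := c - 1 + k) (by linarith) hc
    hβ).const_mul (β * c)
  rw [setLIntegral_congr_fun measurableSet_Ioi heq, ← ofReal_integral_eq_lintegral_ofReal hint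
    ((ae_restrict_iff' measurableSet_Ioi).2 (ae_of_all _ fun t ht => by
      have := rpow_nonneg ht.out.le (c - 1 + k); positivity)),
    integral_const_mul, integral_rpow_mul_exp_neg_mul_rpow hc (by linarith) hβ]
  have h1 : (c - 1 + k + 1) / c = k / c + 1 := by field_simp; ring
  rw [neg_div, h1, neg_add, rpow_add hβ, rpow_neg_one]
  field_simp

theorem lintegral_mul_setLIntegral_Ioi_swap {α : Type*} [MeasurableSpace α] (μ : Measure α)
    [SFinite μ] {f : α → ℝ≥0∞} {N : α → ℝ} {w : ℝ → ℝ≥0∞}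
    (hf : Measurable f) (hN : Measurable N) (hw : Measurable w) :
    ∫⁻ x, f x * (∫⁻ t in Ioi (N x), w t) ∂μ = ∫⁻ t, w t * ∫⁻ x in {x | N x < t}, f x ∂μ := by
  have hmeas : Measurable (Function.uncurry fun x t => f x * (Ioi (N x)).indicator w t) := by
    have hS : MeasurableSet {q : α × ℝ | N q.1 < q.2} :=
      measurableSet_lt (hN.comp measurable_fst) measurable_snd
    exact (hf.comp measurable_fst).mul ((hw.comp measurable_snd).indicator hS)
  calc ∫⁻ x, f x * (∫⁻ t in Ioi (N x), w t) ∂μ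
      = ∫⁻ x, (∫⁻ t, f x * (Ioi (N x)).indicator w t) ∂μ := by
        refine lintegral_congr fun x => ?_
        rw [lintegral_const_mul _ (hw.indicator measurableSet_Ioi),
          lintegral_indicator measurableSet_Ioi]
    _ = ∫⁻ t, ∫⁻ x, f x * (Ioi (N x)).indicator w t ∂μ :=
        lintegral_lintegral_swap hmeas.aemeasurable
    _ = ∫⁻ t, w t * ∫⁻ x in {x | N x < t}, f x ∂μ := by
        refine lintegral_congr fun t => ?_
        rw [← lintegral_indicator (measurableSet_lt hN measurable_const),
          ← lintegral_const_mul _ (hf.indicator (measurableSet_lt hN measurable_const))]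
        refine lintegral_congr fun x => ?_
        by_cases hx : N x < t <;> simp [hx, mul_comm]

section Homogeneous

variable {E : Type*} [NormedAddCommGroup E] [NormedSpace ℝ E] [FiniteDimensional ℝ E]
  [MeasurableSpace E] [BorelSpace E] (μ : Measure E) [μ.IsAddHaarMeasure]

theorem setLIntegral_sublevel_eq_of_homogeneous {N : E → ℝ} {f : E → ℝ≥0∞} {D t : ℝ}
    (hN : Measurable N) (hNsmul : ∀ r > 0, ∀ x, N (r • x) = r * N x)
    (hfsmul : ∀ r > 0, ∀ x, f (r • x) = ENNReal.ofReal (r ^ D) * f x) (ht : 0 < t) :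
    ∫⁻ x in {x | N x < t}, f x ∂μ
      = ENNReal.ofReal (t ^ (D + finrank ℝ E)) * ∫⁻ x in {x | N x < 1}, f x ∂μ := by
  let e : E ≃ᵐ E := (Homeomorph.smul (Units.mk0 t ht.ne')).toMeasurableEquiv
  have hpre : e ⁻¹' {x | N x < t} = {x | N x < 1} := by
    ext x
    simp [e, hNsmul t ht, mul_lt_iff_lt_one_right ht]
  have hmap := Measure.map_addHaar_smul μ ht.ne'
  have key : ENNReal.ofReal (t ^ D) * ∫⁻ x in {x | N x < 1}, f x ∂μ
      = ENNReal.ofReal (|(t ^ finrank ℝ E)⁻¹|) * ∫⁻ x in {x | N x < t}, f x ∂μ := by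
    calc ENNReal.ofReal (t ^ D) * ∫⁻ x in {x | N x < 1}, f x ∂μ
        = ∫⁻ x in {x | N x < 1}, f (e x) ∂μ := by
          rw [← lintegral_const_mul' _ _ ENNReal.ofReal_ne_top]
          exact lintegral_congr fun x => (hfsmul t ht x).symm
      _ = ∫⁻ x in {x | N x < t}, f x ∂(Measure.map (t • ·) μ) := by
          change _ = ∫⁻ x in {x | N x < t}, f x ∂(Measure.map e μ)
          rw [Measure.restrict_map e.measurable (measurableSet_lt hN measurable_const), hpre]
          exact (lintegral_map_equiv f e).symm
      _ = _ := by
          rw [hmap, Measure.restrict_smul, lintegral_smul_measure, smul_eq_mul]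
  have htd : 0 < t ^ finrank ℝ E := pow_pos ht _
  calc ∫⁻ x in {x | N x < t}, f x ∂μ
      = ENNReal.ofReal (t ^ finrank ℝ E)
          * (ENNReal.ofReal |(t ^ finrank ℝ E)⁻¹| * ∫⁻ x in {x | N x < t}, f x ∂μ) := by
        rw [← mul_assoc, ← ENNReal.ofReal_mul htd.le, abs_of_pos (inv_pos.2 htd),
          mul_inv_cancel₀ htd.ne', ENNReal.ofReal_one, one_mul]
    _ = _ := by
        rw [← key, ← mul_assoc, ← ENNReal.ofReal_mul htd.le, rpow_add ht, rpow_natCast,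
          mul_comm (t ^ finrank ℝ E)]

theorem integral_mul_exp_neg_mul_rpow_of_homogeneous {N G : E → ℝ} {D β c : ℝ}
    (hN : Measurable N) (hN0 : ∀ x, 0 ≤ N x) (hNsmul : ∀ r > 0, ∀ x, N (r • x) = r * N x)
    (hG : Measurable G) (hG0 : ∀ x, 0 ≤ G x) (hGsmul : ∀ r > 0, ∀ x, G (r • x) = r ^ D * G x)
    (hβ : 0 < β) (hc : 0 < c) (hD : -c < D + finrank ℝ E) :
    ∫ x, G x * exp (-β * N x ^ c) ∂μ
      = (∫ x in {x | N x < 1}, G x ∂μ)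
        * (β ^ (-((D + finrank ℝ E) / c)) * Gamma ((D + finrank ℝ E) / c + 1)) := by
  set k := D + (finrank ℝ E : ℝ)
  set I := ∫⁻ x in {x | N x < 1}, ENNReal.ofReal (G x) ∂μ
  have hsublevel : ∀ t > 0, ∫⁻ x in {x | N x < t}, ENNReal.ofReal (G x) ∂μ
      = ENNReal.ofReal (t ^ k) * I := fun t ht =>
    setLIntegral_sublevel_eq_of_homogeneous μ hN hNsmul (fun r hr x => by
      rw [hGsmul r hr, ENNReal.ofReal_mul (rpow_nonneg hr.le D)]) ht
  have hempty : ∀ t ≤ 0, {x | N x < t} = ∅ := fun t ht =>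
    eq_empty_of_forall_notMem fun x hx => (hN0 x).not_gt (hx.out.trans_le ht)
  have hlint : ∫⁻ x, ENNReal.ofReal (G x * exp (-β * N x ^ c)) ∂μ
      = I * ENNReal.ofReal (β ^ (-(k / c)) * Gamma (k / c + 1)) := by
    calc ∫⁻ x, ENNReal.ofReal (G x * exp (-β * N x ^ c)) ∂μ
        = ∫⁻ x, ENNReal.ofReal (G x)
            * (∫⁻ t in Ioi (N x), ENNReal.ofReal (weibullPDF β c t)) ∂μ := by
          refine lintegral_congr fun x => ?_
          rw [lintegral_Ioi_weibullPDF hβ hc (hN0 x), ENNReal.ofReal_mul (hG0 x)]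
      _ = ∫⁻ t, ENNReal.ofReal (weibullPDF β c t)
            * ∫⁻ x in {x | N x < t}, ENNReal.ofReal (G x) ∂μ :=
          lintegral_mul_setLIntegral_Ioi_swap μ hG.ennreal_ofReal hN
            (show Measurable (weibullPDF β c) by unfold weibullPDF; fun_prop).ennreal_ofReal
      _ = ∫⁻ t in Ioi 0, ENNReal.ofReal (weibullPDF β c t) * (ENNReal.ofReal (t ^ k) * I) := by
          rw [← setLIntegral_eq_of_support_subset (s := Ioi 0)]
          · exact setLIntegral_congr_fun measurableSet_Ioi fun t ht => by rw [hsublevel t ht]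
          · intro t ht
            by_contra hle
            simp [hempty t (not_lt.1 hle)] at ht
      _ = I * ENNReal.ofReal (β ^ (-(k / c)) * Gamma (k / c + 1)) := by
          simp_rw [← mul_assoc]
          rw [lintegral_mul_const _ (by unfold weibullPDF; fun_prop),
            lintegral_Ioi_weibullPDF_mul_rpow hβ hc hD, mul_comm]
  have hF0 : ∀ x, 0 ≤ G x * exp (-β * N x ^ c) := fun x => mul_nonneg (hG0 x) (exp_nonneg _)
  rw [integral_eq_lintegral_of_nonneg_ae (ae_of_all _ hF0) (by fun_prop), hlint,
    integral_eq_lintegral_of_nonneg_ae (ae_of_all _ hG0) hG.aestronglyMeasurable,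
    ENNReal.toReal_mul, ENNReal.toReal_ofReal]
  have := Gamma_pos_of_pos (show 0 < k / c + 1 by
    rw [div_add_one hc.ne']; exact div_pos (by linarith) hc)
  positivity

end Homogeneous

lemma eNorm_nonneg {n : ℕ} (z : Fin n → ℂ) : 0 ≤ eNorm z := sqrt_nonneg _

lemma continuous_eNorm (n : ℕ) : Continuous (eNorm (n := n)) := by
  unfold eNorm; fun_prop

lemma eNorm_smul {n : ℕ} {r : ℝ} (hr : 0 ≤ r) (z : Fin n → ℂ) : eNorm (r • z) = r * eNorm z := by
  simp only [eNorm, Pi.smul_apply, norm_smul, norm_eq_abs, abs_of_nonneg hr, mul_pow,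
    ← Finset.mul_sum, sqrt_mul (sq_nonneg r), sqrt_sq hr]

lemma eNorm_rpow_two {n : ℕ} (z : Fin n → ℂ) : eNorm z ^ (2 : ℝ) = ∑ j, ‖z j‖ ^ (2 : ℝ) := by
  simp only [rpow_two, eNorm]
  exact sq_sqrt (by positivity)

lemma norm_prod_pow_rpow {ι : Type*} [Fintype ι] (ν : ι → ℕ) (p : ℝ) (z : ι → ℂ) :
    ‖∏ j, z j ^ ν j‖ ^ p = ∏ j, ‖z j‖ ^ ((ν j : ℝ) * p) := by
  rw [norm_prod, ← finsetProd_rpow _ _ fun j _ => norm_nonneg _]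
  refine Finset.prod_congr rfl fun j _ => ?_
  rw [norm_pow, ← rpow_natCast, ← rpow_mul (norm_nonneg _)]

lemma prod_norm_rpow_smul {ι : Type*} [Fintype ι] (q : ι → ℝ) {r : ℝ} (hr : 0 < r) (z : ι → ℂ) :
    ∏ j, ‖(r • z) j‖ ^ q j = r ^ (∑ j, q j) * ∏ j, ‖z j‖ ^ q j := by
  simp only [Pi.smul_apply, norm_smul, norm_eq_abs, abs_of_pos hr,
    mul_rpow hr.le (norm_nonneg _), Finset.prod_mul_distrib, rpow_sum_of_pos hr]

lemma integral_prod_norm_rpow_mul_exp_neg_eNorm_sq {n : ℕ} (q : Fin n → ℝ) (hq : ∀ j, -2 < q j) :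
    ∫ z : Fin n → ℂ, (∏ j, ‖z j‖ ^ q j) * exp (-1 * eNorm z ^ (2 : ℝ))
      = π ^ n * ∏ j, Gamma (q j / 2 + 1) := by
  have hsplit : ∀ z : Fin n → ℂ, (∏ j, ‖z j‖ ^ q j) * exp (-1 * eNorm z ^ (2 : ℝ))
      = ∏ j, ‖z j‖ ^ q j * exp (-‖z j‖ ^ (2 : ℝ)) := by
    intro z
    rw [Finset.prod_mul_distrib, ← exp_sum, eNorm_rpow_two, Finset.sum_neg_distrib, neg_one_mul]
  simp_rw [hsplit]
  rw [integral_fintype_prod_volume_eq_prod (fun j (x : ℂ) => ‖x‖ ^ q j * exp (-‖x‖ ^ (2 : ℝ)))]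
  simp_rw [Complex.integral_rpow_mul_exp_neg_rpow one_le_two (hq _)]
  rw [Finset.prod_mul_distrib, Finset.prod_const, Finset.card_univ, Fintype.card_fin,
    mul_div_cancel_left₀ π two_ne_zero]
  simp_rw [add_div, div_self (two_ne_zero' ℝ)]

lemma integral_prod_norm_rpow_mul_exp_neg_mul_eNorm_rpow {n : ℕ} (q : Fin n → ℝ) {β c : ℝ}
    (hβ : 0 < β) (hc : 0 < c) (hq : -c < ∑ j, q j + 2 * n) :
    ∫ z : Fin n → ℂ, (∏ j, ‖z j‖ ^ q j) * exp (-β * eNorm z ^ c)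
      = (∫ z in {z | eNorm z < 1}, ∏ j, ‖z j‖ ^ q j)
        * (β ^ (-((∑ j, q j + 2 * n) / c)) * Gamma ((∑ j, q j + 2 * n) / c + 1)) := by
  have hfin : (finrank ℝ (Fin n → ℂ) : ℝ) = 2 * n := by
    simp [Module.finrank_pi_fintype, Complex.finrank_real_complex, mul_comm]
  rw [← hfin] at hq ⊢
  exact integral_mul_exp_neg_mul_rpow_of_homogeneous volume (continuous_eNorm n).measurable
    eNorm_nonneg (fun r hr => eNorm_smul hr.le) (by fun_prop) (fun z => by positivity)
    (fun r hr => prod_norm_rpow_smul q hr) hβ hc hq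

lemma setIntegral_eNorm_lt_one_prod_norm_rpow {n : ℕ} (q : Fin n → ℝ) (hq : ∀ j, -2 < q j) :
    ∫ z in {z : Fin n → ℂ | eNorm z < 1}, ∏ j, ‖z j‖ ^ q j
      = π ^ n * (∏ j, Gamma (q j / 2 + 1)) / Gamma ((∑ j, q j + 2 * n) / 2 + 1) := by
  have hk : 0 ≤ ∑ j, q j + 2 * n := by
    have : ∑ j, q j + 2 * n = ∑ j, (q j + 2) := by simp [Finset.sum_add_distrib, mul_comm]
    rw [this]
    exact Finset.sum_nonneg fun j _ => by linarith [hq j]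
  have hgauss := integral_prod_norm_rpow_mul_exp_neg_mul_eNorm_rpow q one_pos two_pos
    (by linarith)
  rw [integral_prod_norm_rpow_mul_exp_neg_eNorm_sq q hq, one_rpow, one_mul] at hgauss
  rw [hgauss, mul_div_cancel_right₀ _ (Gamma_pos_of_pos (by positivity)).ne']

/-- For a multiindex `ν`, `p > 0` and `α, m > 0`,
`∫_{ℂⁿ} |z^ν|^p e^{-α|z|^{2m}} dz
  = (πⁿ/m) · ∏ⱼ Γ(νⱼ p/2 + 1) / Γ(n + |ν| p/2) · Γ((|ν| p + 2n)/(2m)) / α^{(|ν| p + 2n)/(2m)}`. -/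
theorem stmt1 (n : ℕ) (hn : 0 < n) (ν : Fin n → ℕ) (p α m : ℝ)
    (hp : 0 < p) (hα : 0 < α) (hm : 0 < m) :
    (∫ z : Fin n → ℂ,
        ‖∏ j, z j ^ ν j‖ ^ p * Real.exp (-α * eNorm z ^ (2 * m)))
    = (Real.pi ^ n / m) *
        ((∏ j, Real.Gamma ((ν j : ℝ) * p / 2 + 1)) /
          Real.Gamma ((n : ℝ) + (∑ j, (ν j : ℝ)) * p / 2)) *
        (Real.Gamma (((∑ j, (ν j : ℝ)) * p + 2 * n) / (2 * m)) /
          α ^ (((∑ j, (ν j : ℝ)) * p + 2 * n) / (2 * m))) := by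
  have hq : ∀ j, 0 ≤ (ν j : ℝ) * p := fun j => by positivity
  have hk : 0 < (∑ j, (ν j : ℝ)) * p + 2 * n := by
    have : (0 : ℝ) < n := by exact_mod_cast hn
    positivity
  simp_rw [norm_prod_pow_rpow]
  rw [integral_prod_norm_rpow_mul_exp_neg_mul_eNorm_rpow _ hα (by positivity)
      (by rw [← Finset.sum_mul]; linarith),
    setIntegral_eNorm_lt_one_prod_norm_rpow _ fun j => by linarith [hq j], ← Finset.sum_mul,
    Gamma_add_one (by positivity), Gamma_add_one (by positivity), rpow_neg hα.le,
    show (n : ℝ) + (∑ j, (ν j : ℝ)) * p / 2 = ((∑ j, (ν j : ℝ)) * p + 2 * n) / 2 by ring]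
  have := Gamma_pos_of_pos (half_pos hk)
  set P := ∏ j, Gamma ((ν j : ℝ) * p / 2 + 1)
  field_simp
end

section
/- Let f, g be smooth real-valued functions on [a,b], suppose g attains its maximum on [a,b] at the unique point a, with g'(a) ≠ 0 (so g'(a) < 0), and f(a) ≠ 0. Then as λ → +∞, ∫_a^b f(x)e^{λg(x)}dx = e^{λg(a)}·(f(a)/(-g'(a)))·λ^{-1}·(1 + o(1)). -/
open Filter Asymptotics intervalIntegral Set Topology MeasureTheory

theorem expInt (a d k : ℝ) (hk : k ≠ 0) :
    ∫ x in a..(a+d), Real.exp (k*(x-a)) = (Real.exp (k*d) - 1)/k := by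
  have h : ∀ x ∈ Set.uIcc a (a+d), HasDerivAt (fun y => Real.exp (k*(y-a))/k)
      (Real.exp (k*(x-a))) x := by
    intro x _
    have h1 : HasDerivAt (fun y : ℝ => k*(y-a)) k x := by
      simpa using ((hasDerivAt_id x).sub_const a).const_mul k
    have h2 := (h1.exp).div_const k
    simpa [mul_comm, mul_div_assoc, mul_div_cancel_left₀ _ hk] using h2
  have hi : IntervalIntegrable (fun x => Real.exp (k*(x-a))) MeasureTheory.volume a (a+d) :=
    (Real.continuous_exp.comp (by continuity)).intervalIntegrable _ _
  rw [intervalIntegral.integral_eq_sub_of_hasDerivAt h hi]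
  simp [div_sub_div_same]
  ring

theorem stepA (a b : ℝ) (hab : a < b) (g : ℝ → ℝ)
    (hdiff : DifferentiableWithinAt ℝ g (Set.Icc a b) a)
    (hmax : ∀ x ∈ Set.Icc a b, x ≠ a → g x < g a)
    (hg' : derivWithin g (Set.Icc a b) a ≠ 0) :
    derivWithin g (Set.Icc a b) a < 0 := by
  set c := derivWithin g (Set.Icc a b) a with hc
  have hgc : HasDerivWithinAt g c (Set.Icc a b) a := hdiff.hasDerivWithinAt
  have hslope : Tendsto (slope g a) (𝓝[Set.Icc a b \ {a}] a) (𝓝 c) :=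
    hasDerivWithinAt_iff_tendsto_slope.1 hgc
  have hsub : Set.Ioc a b ⊆ Set.Icc a b \ {a} := fun x hx =>
    ⟨⟨hx.1.le, hx.2⟩, ne_of_gt hx.1⟩
  have hslope' : Tendsto (slope g a) (𝓝[Set.Ioc a b] a) (𝓝 c) :=
    hslope.mono_left (nhdsWithin_mono _ hsub)
  have hnb : (𝓝[Set.Ioc a b] a).NeBot := by
    rw [nhdsWithin_Ioc_eq_nhdsGT hab]; infer_instance
  have hle : c ≤ 0 := by
    refine le_of_tendsto hslope' ?_
    filter_upwards [eventually_mem_nhdsWithin] with x hx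
    have hxa : a < x := hx.1
    have hgx : g x < g a := hmax x ⟨hxa.le, hx.2⟩ (ne_of_gt hxa)
    have : (g x - g a) / (x - a) ≤ 0 :=
      le_of_lt (div_neg_of_neg_of_pos (by linarith) (by linarith))
    simpa [slope_def_field] using this
  exact lt_of_le_of_ne hle hg'

set_option maxHeartbeats 1000000 in
theorem fixedlam (a b δ c ε m M lam : ℝ) (f g : ℝ → ℝ)
    (hδ0 : 0 < δ) (hδb : a + δ < b)
    (hcneg : c < 0) (hε : 0 < ε) (hεc : ε ≤ -c/2)
    (hlam0 : 0 < lam)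
    (hfc : ContinuousOn f (Set.Icc a b)) (hgcont : ContinuousOn g (Set.Icc a b))
    (hM : ∀ x ∈ Set.Icc a b, ‖f x‖ ≤ M) (hM0 : 0 ≤ M)
    (hfnear : ∀ x ∈ Set.Icc a (a+δ), |f x - f a| ≤ ε)
    (hgub : ∀ x ∈ Set.Icc a (a+δ), g x - g a ≤ (c+ε)*(x-a))
    (hglb : ∀ x ∈ Set.Icc a (a+δ), (c-ε)*(x-a) ≤ g x - g a)
    (hm : 0 < m)
    (htail_pt : ∀ x ∈ Set.Icc (a+δ) b, g x - g a ≤ -m)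
    (hlam2 : lam * (M * (b-a)) * Real.exp (-m * lam) ≤ ε)
    (hlam3 : Real.exp (lam*(c-ε)*δ) / (-(c-ε)) ≤ ε) :
    |lam * (∫ x in a..b, f x * Real.exp (lam * (g x - g a))) - f a/(-c)|
      ≤ ε*(2/(-c)) + ε*(|f a| * (2/c^2+1)) + ε := by
  have hc2 : (0:ℝ) < c^2 := by nlinarith
  have hce : c + ε < 0 := by linarith
  have hce' : c - ε < 0 := by linarith
  have hk1 : lam*(c+ε) ≠ 0 := ne_of_lt (mul_neg_of_pos_of_neg hlam0 hce)
  have hk2 : lam*(c-ε) ≠ 0 := ne_of_lt (mul_neg_of_pos_of_neg hlam0 hce')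
  have hne1 : c + ε ≠ 0 := ne_of_lt hce
  have hne2 : c - ε ≠ 0 := ne_of_lt hce'
  have hcne : c ≠ 0 := ne_of_lt hcneg
  have hlamne : lam ≠ 0 := ne_of_gt hlam0
  have huIcc : Set.uIcc a (a+δ) = Set.Icc a (a+δ) := Set.uIcc_of_le (by linarith)
  have huIcc2 : Set.uIcc (a+δ) b = Set.Icc (a+δ) b := Set.uIcc_of_le hδb.le
  have hsub1 : Set.Icc a (a+δ) ⊆ Set.Icc a b := Set.Icc_subset_Icc le_rfl hδb.le
  have hsub2 : Set.Icc (a+δ) b ⊆ Set.Icc a b := Set.Icc_subset_Icc (by linarith) le_rfl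
  set F : ℝ → ℝ := fun x => f x * Real.exp (lam * (g x - g a)) with hF
  have contexp : ContinuousOn (fun x => Real.exp (lam*(g x - g a))) (Set.Icc a b) :=
    Real.continuous_exp.comp_continuousOn
      (continuousOn_const.mul (hgcont.sub continuousOn_const))
  have contF : ContinuousOn F (Set.Icc a b) := hfc.mul contexp
  have hint1 : IntervalIntegrable F volume a (a+δ) := by
    apply ContinuousOn.intervalIntegrable; rw [huIcc]; exact contF.mono hsub1
  have hint2 : IntervalIntegrable F volume (a+δ) b := by
    apply ContinuousOn.intervalIntegrable; rw [huIcc2]; exact contF.mono hsub2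
  have hintE : IntervalIntegrable (fun x => Real.exp (lam*(g x - g a))) volume a (a+δ) := by
    apply ContinuousOn.intervalIntegrable; rw [huIcc]; exact contexp.mono hsub1
  have hsplit : ∫ x in a..b, F x = (∫ x in a..(a+δ), F x) + ∫ x in (a+δ)..b, F x :=
    (integral_add_adjacent_intervals hint1 hint2).symm
  -- tail bound
  have hTb : |∫ x in (a+δ)..b, F x| ≤ M * Real.exp (-m*lam) * (b - (a+δ)) := by
    have h := intervalIntegral.norm_integral_le_of_norm_le_const
      (C := M * Real.exp (-m*lam)) (f := F) (a := a+δ) (b := b) ?_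
    · rwa [Real.norm_eq_abs, abs_of_nonneg (by linarith : (0:ℝ) ≤ b - (a+δ))] at h
    · intro x hx
      rw [Set.uIoc_of_le hδb.le] at hx
      have hxI : x ∈ Set.Icc (a+δ) b := ⟨hx.1.le, hx.2⟩
      have h1 : ‖f x‖ ≤ M := hM x (hsub2 hxI)
      rw [Real.norm_eq_abs] at h1
      have h2 : Real.exp (lam*(g x - g a)) ≤ Real.exp (-m*lam) := by
        apply Real.exp_le_exp.2
        have h3 := htail_pt x hxI
        nlinarith
      rw [hF, Real.norm_eq_abs, abs_mul, abs_of_nonneg (Real.exp_nonneg _)]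
      exact mul_le_mul h1 h2 (Real.exp_nonneg _) hM0
  have hTail : lam * |∫ x in (a+δ)..b, F x| ≤ ε := by
    have h1 : lam * |∫ x in (a+δ)..b, F x| ≤ lam * (M * Real.exp (-m*lam) * (b - (a+δ))) :=
      mul_le_mul_of_nonneg_left hTb hlam0.le
    have h2 : lam * (M * Real.exp (-m*lam) * (b - (a+δ))) ≤ lam * (M*(b-a)) * Real.exp (-m*lam) := by
      have hδba : b - (a+δ) ≤ b - a := by linarith
      have hexp := Real.exp_pos (-m*lam)
      nlinarith [mul_nonneg (mul_nonneg (mul_nonneg hlam0.le hM0) hexp.le) hδ0.le]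
    linarith
  -- near part
  set E : ℝ := ∫ x in a..(a+δ), Real.exp (lam*(g x - g a)) with hE
  have hE0 : 0 ≤ E := intervalIntegral.integral_nonneg (by linarith) (fun x _ => Real.exp_nonneg _)
  have hintfa : IntervalIntegrable (fun x => f a * Real.exp (lam*(g x - g a))) volume a (a+δ) :=
    hintE.const_mul (f a)
  have hrw : ∫ x in a..(a+δ), (f x - f a) * Real.exp (lam*(g x - g a))
      = (∫ x in a..(a+δ), F x) - f a * E := by
    have heq : (fun x => (f x - f a) * Real.exp (lam*(g x - g a)))
        = fun x => F x - f a * Real.exp (lam*(g x - g a)) := by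
      funext x; simp only [hF]; ring
    rw [heq, intervalIntegral.integral_sub hint1 hintfa, intervalIntegral.integral_const_mul, hE]
  have hN1 : |(∫ x in a..(a+δ), F x) - f a * E| ≤ ε * E := by
    rw [← hrw]
    refine (intervalIntegral.abs_integral_le_integral_abs (by linarith)).trans ?_
    have intabs : IntervalIntegrable
        (fun x => |(f x - f a) * Real.exp (lam*(g x - g a))|) volume a (a+δ) := by
      apply ContinuousOn.intervalIntegrable; rw [huIcc]
      exact (((hfc.mono hsub1).sub continuousOn_const).mul (contexp.mono hsub1)).abs
    have hmono : (∫ x in a..(a+δ), |(f x - f a) * Real.exp (lam*(g x - g a))|)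
        ≤ ∫ x in a..(a+δ), ε * Real.exp (lam*(g x - g a)) := by
      apply intervalIntegral.integral_mono_on (by linarith) intabs (hintE.const_mul ε)
      intro x hx
      rw [abs_mul, abs_of_nonneg (Real.exp_nonneg _)]
      exact mul_le_mul_of_nonneg_right (hfnear x hx) (Real.exp_nonneg _)
    rwa [intervalIntegral.integral_const_mul, ← hE] at hmono
  -- E upper bound
  have hEub : lam * E ≤ 1/(-(c+ε)) := by
    have hmono : E ≤ ∫ x in a..(a+δ), Real.exp ((lam*(c+ε))*(x-a)) := by
      rw [hE]
      apply intervalIntegral.integral_mono_on (by linarith) hintE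
        ((Real.continuous_exp.comp (by continuity)).intervalIntegrable _ _)
      intro x hx
      apply Real.exp_le_exp.2
      calc lam * (g x - g a) ≤ lam * ((c+ε)*(x-a)) :=
            mul_le_mul_of_nonneg_left (hgub x hx) hlam0.le
        _ = (lam*(c+ε))*(x-a) := by ring
    rw [expInt a δ (lam*(c+ε)) hk1] at hmono
    have h2 : lam * ((Real.exp ((lam*(c+ε))*δ) - 1)/(lam*(c+ε)))
        = (Real.exp ((lam*(c+ε))*δ) - 1)/(c+ε) := by
      field_simp
    have h3 : (Real.exp ((lam*(c+ε))*δ) - 1)/(c+ε) ≤ 1/(-(c+ε)) := by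
      have hu : (0:ℝ) < Real.exp ((lam*(c+ε))*δ) := Real.exp_pos _
      have hrw2 : (1:ℝ)/(-(c+ε)) = (-1)/(c+ε) := by rw [div_neg, neg_div]
      rw [hrw2, div_le_div_right_of_neg hce]
      linarith
    calc lam * E ≤ lam * ((Real.exp ((lam*(c+ε))*δ) - 1)/(lam*(c+ε))) :=
          mul_le_mul_of_nonneg_left hmono hlam0.le
      _ = (Real.exp ((lam*(c+ε))*δ) - 1)/(c+ε) := h2
      _ ≤ 1/(-(c+ε)) := h3
  -- E lower bound
  have hElb : 1/(-(c-ε)) - ε ≤ lam * E := by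
    have hmono : (∫ x in a..(a+δ), Real.exp ((lam*(c-ε))*(x-a))) ≤ E := by
      rw [hE]
      apply intervalIntegral.integral_mono_on (by linarith)
        ((Real.continuous_exp.comp (by continuity)).intervalIntegrable _ _) hintE
      intro x hx
      apply Real.exp_le_exp.2
      calc (lam*(c-ε))*(x-a) = lam * ((c-ε)*(x-a)) := by ring
        _ ≤ lam * (g x - g a) := mul_le_mul_of_nonneg_left (hglb x hx) hlam0.le
    rw [expInt a δ (lam*(c-ε)) hk2] at hmono
    have h2 : lam * ((Real.exp ((lam*(c-ε))*δ) - 1)/(lam*(c-ε)))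
        = (Real.exp ((lam*(c-ε))*δ) - 1)/(c-ε) := by
      field_simp
    have h4 : (Real.exp ((lam*(c-ε))*δ) - 1)/(c-ε)
        = 1/(-(c-ε)) - Real.exp (lam*(c-ε)*δ)/(-(c-ε)) := by
      rw [← sub_div]
      have : (Real.exp ((lam*(c-ε))*δ) - 1) = -(1 - Real.exp (lam*(c-ε)*δ)) := by ring
      rw [this, neg_div, ← div_neg]
    have h5 : lam * ((Real.exp ((lam*(c-ε))*δ) - 1)/(lam*(c-ε))) ≤ lam * E :=
      mul_le_mul_of_nonneg_left hmono hlam0.le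
    rw [h2, h4] at h5
    linarith
  -- distance of lam*E from 1/(-c)
  have hEdist : |lam*E - 1/(-c)| ≤ 2*ε/c^2 + ε := by
    have hb1 : -c ≠ 0 := neg_ne_zero.2 hcne
    have hb2 : -(c-ε) ≠ 0 := neg_ne_zero.2 hne2
    have hb3 : -(c+ε) ≠ 0 := neg_ne_zero.2 hne1
    rw [abs_le]
    constructor
    · have e1 : 1/(-c) - 1/(-(c-ε)) = ε/((-c)*(-(c-ε))) := by
        rw [div_sub_div _ _ hb1 hb2]
        congr 1; ring
      have e2 : c^2 ≤ (-c)*(-(c-ε)) := by nlinarith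
      have e3 : ε/((-c)*(-(c-ε))) ≤ ε/c^2 :=
        div_le_div_of_nonneg_left hε.le hc2 e2
      have e4 : ε/c^2 ≤ 2*ε/c^2 := by
        rw [div_le_div_iff₀ hc2 hc2]; nlinarith
      linarith
    · have e1 : 1/(-(c+ε)) - 1/(-c) = ε/((-(c+ε))*(-c)) := by
        rw [div_sub_div _ _ hb3 hb1]
        congr 1; ring
      have e2 : c^2/2 ≤ (-(c+ε))*(-c) := by nlinarith
      have e3 : ε/((-(c+ε))*(-c)) ≤ ε/(c^2/2) :=
        div_le_div_of_nonneg_left hε.le (by linarith) e2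
      have e4 : ε/(c^2/2) = 2*ε/c^2 := by
        rw [div_div_eq_mul_div]; ring
      linarith
  -- final assembly
  have htri : |lam * (∫ x in a..b, F x) - f a/(-c)|
      ≤ lam*|(∫ x in a..(a+δ), F x) - f a * E| + |f a| * |lam*E - 1/(-c)|
        + lam * |∫ x in (a+δ)..b, F x| := by
    have hid : lam * (∫ x in a..b, F x) - f a/(-c)
        = lam*((∫ x in a..(a+δ), F x) - f a * E) + f a*(lam*E - 1/(-c))
          + lam*(∫ x in (a+δ)..b, F x) := by
      rw [hsplit]; ring
    rw [hid]
    calc |lam*((∫ x in a..(a+δ), F x) - f a * E) + f a*(lam*E - 1/(-c))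
          + lam*(∫ x in (a+δ)..b, F x)|
        ≤ |lam*((∫ x in a..(a+δ), F x) - f a * E) + f a*(lam*E - 1/(-c))|
          + |lam*(∫ x in (a+δ)..b, F x)| := abs_add_le _ _
      _ ≤ |lam*((∫ x in a..(a+δ), F x) - f a * E)| + |f a*(lam*E - 1/(-c))|
          + |lam*(∫ x in (a+δ)..b, F x)| := by
            linarith [abs_add_le (lam*((∫ x in a..(a+δ), F x) - f a * E)) (f a*(lam*E - 1/(-c)))]
      _ = lam*|(∫ x in a..(a+δ), F x) - f a * E| + |f a| * |lam*E - 1/(-c)|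
          + lam * |∫ x in (a+δ)..b, F x| := by
            rw [abs_mul, abs_mul, abs_mul, abs_of_pos hlam0]
  have t1 : lam*|(∫ x in a..(a+δ), F x) - f a * E| ≤ ε*(2/(-c)) := by
    have h1 : lam*|(∫ x in a..(a+δ), F x) - f a * E| ≤ lam*(ε*E) :=
      mul_le_mul_of_nonneg_left hN1 hlam0.le
    have h3 : ε*(lam*E) ≤ ε*(1/(-(c+ε))) := mul_le_mul_of_nonneg_left hEub hε.le
    have h4 : 1/(-(c+ε)) ≤ 2/(-c) := by
      rw [div_le_div_iff₀ (by linarith) (by linarith)]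
      linarith
    have h5 : ε*(1/(-(c+ε))) ≤ ε*(2/(-c)) := mul_le_mul_of_nonneg_left h4 hε.le
    nlinarith
  have t2 : |f a| * |lam*E - 1/(-c)| ≤ ε*(|f a| * (2/c^2+1)) := by
    have h1 : |f a| * |lam*E - 1/(-c)| ≤ |f a| * (2*ε/c^2 + ε) :=
      mul_le_mul_of_nonneg_left hEdist (abs_nonneg _)
    have h2 : |f a| * (2*ε/c^2 + ε) = ε*(|f a| * (2/c^2+1)) := by ring
    linarith
  linarith

set_option maxHeartbeats 1000000 in
theorem key (a b : ℝ) (hab : a < b) (f g : ℝ → ℝ)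
    (hfc : ContinuousOn f (Set.Icc a b)) (hgcont : ContinuousOn g (Set.Icc a b))
    (c : ℝ) (hcneg : c < 0) (hgd : HasDerivWithinAt g c (Set.Icc a b) a)
    (hmax : ∀ x ∈ Set.Icc a b, x ≠ a → g x < g a) :
    Filter.Tendsto (fun lam : ℝ => lam * ∫ x in a..b, f x * Real.exp (lam * (g x - g a)))
      Filter.atTop (𝓝 (f a / (-c))) := by
  rw [Metric.tendsto_nhds]
  intro ε0 hε0
  have hc2 : (0:ℝ) < c^2 := by nlinarith
  obtain ⟨M, hM⟩ := isCompact_Icc.exists_bound_of_continuousOn hfc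
  have hM0 : 0 ≤ M := le_trans (norm_nonneg _) (hM a ⟨le_refl a, hab.le⟩)
  set C : ℝ := |f a| * (2/c^2 + 1) + 2/(-c) + 2 with hCdef
  have hC : 0 < C := by
    have h1 : 0 ≤ |f a| * (2/c^2 + 1) := by positivity
    have h2 : 0 < 2/(-c) := div_pos two_pos (by linarith)
    rw [hCdef]; linarith
  set ε : ℝ := min (-c/2) (ε0/(2*C)) with hεdef
  have hε : 0 < ε := lt_min (by linarith) (div_pos hε0 (by linarith))
  have hεc : ε ≤ -c/2 := min_le_left _ _
  have hεe : ε ≤ ε0/(2*C) := min_le_right _ _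
  have hce : c + ε < 0 := by linarith
  have hce' : c - ε < 0 := by linarith
  -- choose δ
  have hslope : Filter.Tendsto (slope g a) (𝓝[Set.Icc a b \ {a}] a) (𝓝 c) :=
    hasDerivWithinAt_iff_tendsto_slope.1 hgd
  have hsl_ev : {x | dist (slope g a x) c < ε} ∈ 𝓝[Set.Icc a b \ {a}] a :=
    hslope (Metric.ball_mem_nhds c hε)
  obtain ⟨r1, hr1, hball1⟩ := Metric.mem_nhdsWithin_iff.1 hsl_ev
  have hfa_cont : Filter.Tendsto f (𝓝[Set.Icc a b] a) (𝓝 (f a)) := hfc a ⟨le_refl a, hab.le⟩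
  have hf_ev : {x | dist (f x) (f a) < ε} ∈ 𝓝[Set.Icc a b] a :=
    hfa_cont (Metric.ball_mem_nhds (f a) hε)
  obtain ⟨r2, hr2, hball2⟩ := Metric.mem_nhdsWithin_iff.1 hf_ev
  set δ : ℝ := min (min r1 r2) (b - a) / 2 with hδdef
  have hδ0 : 0 < δ := by
    have : 0 < min (min r1 r2) (b-a) := lt_min (lt_min hr1 hr2) (by linarith)
    rw [hδdef]; linarith
  have hδr1 : δ < r1 := by
    have h1 : min (min r1 r2) (b-a) ≤ r1 := le_trans (min_le_left _ _) (min_le_left _ _)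
    rw [hδdef]; linarith
  have hδr2 : δ < r2 := by
    have h1 : min (min r1 r2) (b-a) ≤ r2 := le_trans (min_le_left _ _) (min_le_right _ _)
    rw [hδdef]; linarith
  have hδb : a + δ < b := by
    have h1 : min (min r1 r2) (b-a) ≤ b - a := min_le_right _ _
    rw [hδdef]; linarith
  have hsub1 : Set.Icc a (a+δ) ⊆ Set.Icc a b := Set.Icc_subset_Icc le_rfl hδb.le
  have hfnear : ∀ x ∈ Set.Icc a (a+δ), |f x - f a| ≤ ε := by
    intro x hx
    have hb2 : x ∈ Metric.ball a r2 := by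
      rw [Metric.mem_ball, Real.dist_eq, abs_of_nonneg (by linarith [hx.1])]
      linarith [hx.2]
    have := hball2 ⟨hb2, hsub1 hx⟩
    rw [Set.mem_setOf_eq, Real.dist_eq] at this
    exact this.le
  have hgub : ∀ x ∈ Set.Icc a (a+δ), g x - g a ≤ (c+ε)*(x-a) := by
    intro x hx
    rcases eq_or_ne x a with rfl | hxa
    · simp
    · have hxgt : a < x := lt_of_le_of_ne hx.1 (Ne.symm hxa)
      have hb1 : x ∈ Metric.ball a r1 := by
        rw [Metric.mem_ball, Real.dist_eq, abs_of_nonneg (by linarith)]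
        linarith [hx.2]
      have hs := hball1 ⟨hb1, hsub1 hx, hxa⟩
      rw [Set.mem_setOf_eq, Real.dist_eq] at hs
      have hs2 : slope g a x ≤ c + ε := by
        have := abs_le.1 hs.le; linarith [this.2]
      rw [slope_def_field] at hs2
      have := (div_le_iff₀ (by linarith : (0:ℝ) < x - a)).1 hs2
      linarith
  have hglb : ∀ x ∈ Set.Icc a (a+δ), (c-ε)*(x-a) ≤ g x - g a := by
    intro x hx
    rcases eq_or_ne x a with rfl | hxa
    · simp
    · have hxgt : a < x := lt_of_le_of_ne hx.1 (Ne.symm hxa)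
      have hb1 : x ∈ Metric.ball a r1 := by
        rw [Metric.mem_ball, Real.dist_eq, abs_of_nonneg (by linarith)]
        linarith [hx.2]
      have hs := hball1 ⟨hb1, hsub1 hx, hxa⟩
      rw [Set.mem_setOf_eq, Real.dist_eq] at hs
      have hs2 : c - ε ≤ slope g a x := by
        have := abs_le.1 hs.le; linarith [this.1]
      rw [slope_def_field] at hs2
      have := (le_div_iff₀ (by linarith : (0:ℝ) < x - a)).1 hs2
      linarith
  -- tail max
  obtain ⟨x₀, hx₀mem, hx₀max⟩ := isCompact_Icc.exists_isMaxOn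
    (Set.nonempty_Icc.2 hδb.le) (hgcont.mono (Set.Icc_subset_Icc (by linarith) le_rfl))
  set m : ℝ := g a - g x₀ with hmdef
  have hm : 0 < m := by
    have := hmax x₀ ⟨by linarith [hx₀mem.1], hx₀mem.2⟩
      (by intro h; rw [h] at hx₀mem; linarith [hx₀mem.1])
    rw [hmdef]; linarith
  have htail_pt : ∀ x ∈ Set.Icc (a+δ) b, g x - g a ≤ -m := by
    intro x hx
    have := hx₀max hx
    simp only [Set.mem_setOf_eq] at this
    rw [hmdef]; linarith
  -- eventual facts in lam
  have ev2 : ∀ᶠ lam in Filter.atTop, lam * (M * (b-a)) * Real.exp (-m * lam) ≤ ε := by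
    have h0 : Filter.Tendsto (fun lam : ℝ => lam * Real.exp (-m * lam)) Filter.atTop (𝓝 0) := by
      have := tendsto_rpow_mul_exp_neg_mul_atTop_nhds_zero 1 m hm
      refine this.congr' ?_
      filter_upwards [Filter.eventually_gt_atTop 0] with x hx
      rw [Real.rpow_one]
    have h1 : Filter.Tendsto (fun lam : ℝ => lam * (M * (b-a)) * Real.exp (-m * lam))
        Filter.atTop (𝓝 0) := by
      have := h0.const_mul (M * (b-a))
      simpa [mul_comm, mul_assoc, mul_left_comm] using this
    exact (h1.eventually_lt_const hε).mono fun x hx => hx.le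
  have ev3 : ∀ᶠ lam in Filter.atTop, Real.exp (lam*(c-ε)*δ) / (-(c-ε)) ≤ ε := by
    have h0 : Filter.Tendsto (fun lam : ℝ => lam*(c-ε)*δ) Filter.atTop Filter.atBot := by
      have hneg : (c-ε)*δ < 0 := mul_neg_of_neg_of_pos hce' hδ0
      have := Filter.tendsto_id.atTop_mul_const_of_neg hneg
      simpa [mul_assoc] using this
    have h1 : Filter.Tendsto (fun lam : ℝ => Real.exp (lam*(c-ε)*δ) / (-(c-ε)))
        Filter.atTop (𝓝 0) := by
      have := (Real.tendsto_exp_atBot.comp h0).div_const (-(c-ε))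
      simpa using this
    exact (h1.eventually_lt_const hε).mono fun x hx => hx.le
  filter_upwards [Filter.eventually_ge_atTop 1, ev2, ev3] with lam hlam1 hlam2 hlam3
  have hlam0 : (0:ℝ) < lam := by linarith
  have hmain := fixedlam a b δ c ε m M lam f g hδ0 hδb hcneg hε hεc hlam0 hfc hgcont
    hM hM0 hfnear hgub hglb hm htail_pt hlam2 hlam3
  rw [Real.dist_eq]
  have hsum : ε*(2/(-c)) + ε*(|f a| * (2/c^2+1)) + ε = ε*(C-1) := by
    rw [hCdef]; ring
  have h2Cε : ε*(2*C) ≤ ε0 := by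
    rw [← le_div_iff₀ (by positivity)]; exact hεe
  have hfin : ε*(C-1) < ε0 := by nlinarith
  exact lt_of_le_of_lt (hmain.trans_eq hsum) hfin

/-- Laplace's method, boundary-point case. If `f, g` are smooth on
`[a,b]`, `g` attains its maximum on `[a,b]` only at `a`, with one-sided derivative
`g'(a) ≠ 0`, and `f(a) ≠ 0`, then as `λ → +∞`,
`∫_a^b f(x) e^{λ g(x)} dx ∼ e^{λ g(a)} · (f(a)/(-g'(a))) · λ⁻¹`. -/
theorem stmt17 (a b : ℝ) (hab : a < b) (f g : ℝ → ℝ)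
    (hf : ContDiffOn ℝ (⊤ : ℕ∞) f (Set.Icc a b)) (hg : ContDiffOn ℝ (⊤ : ℕ∞) g (Set.Icc a b))
    (hmax : ∀ x ∈ Set.Icc a b, x ≠ a → g x < g a)
    (hg' : derivWithin g (Set.Icc a b) a ≠ 0)
    (hfa : f a ≠ 0) :
    (fun lam : ℝ => ∫ x in a..b, f x * Real.exp (lam * g x)) ~[atTop]
      (fun lam : ℝ =>
        Real.exp (lam * g a) * (f a / (-(derivWithin g (Set.Icc a b) a))) / lam) := by
  set c : ℝ := derivWithin g (Set.Icc a b) a with hcdef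
  have hdiff : DifferentiableWithinAt ℝ g (Set.Icc a b) a :=
    (hg.differentiableOn (by simp)) a (Set.left_mem_Icc.2 hab.le)
  have hcneg : c < 0 := stepA a b hab g hdiff hmax hg'
  have hncpos : (0:ℝ) < -c := by linarith
  have hK : f a / (-c) ≠ 0 := div_ne_zero hfa (ne_of_gt hncpos)
  have hv : ∀ᶠ lam : ℝ in atTop,
      Real.exp (lam * g a) * (f a / (-c)) / lam ≠ 0 := by
    filter_upwards [eventually_gt_atTop 0] with lam hlam
    exact div_ne_zero (mul_ne_zero (Real.exp_ne_zero _) hK) (ne_of_gt hlam)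
  rw [Asymptotics.isEquivalent_iff_tendsto_one hv]
  have hkey := key a b hab f g hf.continuousOn hg.continuousOn c hcneg
    hdiff.hasDerivWithinAt hmax
  have h1 : Tendsto (fun lam : ℝ =>
      (lam * ∫ x in a..b, f x * Real.exp (lam*(g x - g a))) / (f a/(-c)))
      atTop (𝓝 1) := by
    have := hkey.div_const (f a/(-c))
    rwa [div_self hK] at this
  refine h1.congr' ?_
  have hudecomp : ∀ lam : ℝ, (∫ x in a..b, f x * Real.exp (lam * g x))
      = Real.exp (lam * g a) * ∫ x in a..b, f x * Real.exp (lam*(g x - g a)) := by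
    intro lam
    rw [← intervalIntegral.integral_const_mul]
    apply intervalIntegral.integral_congr
    intro x _
    show f x * Real.exp (lam * g x)
        = Real.exp (lam * g a) * (f x * Real.exp (lam * (g x - g a)))
    rw [show lam * g x = lam * g a + lam * (g x - g a) by ring, Real.exp_add]
    ring
  filter_upwards [eventually_gt_atTop 0] with lam hlam
  have hexp : Real.exp (lam * g a) ≠ 0 := Real.exp_ne_zero _
  have hlamne : lam ≠ 0 := ne_of_gt hlam
  simp only [Pi.div_apply]
  rw [hudecomp lam]
  field_simp
end

section
/- Let f, g be smooth real-valued functions on [a,b], suppose g attains its maximum at a unique interior point x₀ ∈ (a,b) with g''(x₀) < 0 and f(x₀) ≠ 0. Then as λ → +∞, ∫_a^b f(x)e^{λg(x)}dx = f(x₀)e^{λg(x₀)}·√(2π/(λ·(-g''(x₀))))·(1 + o(1)). -/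
set_option maxHeartbeats 1000000

open Filter Asymptotics intervalIntegral
open Real Set Topology MeasureTheory

lemma slope_sq_tendsto (g : ℝ → ℝ) (x₀ : ℝ) (V : Set ℝ) (hVo : IsOpen V) (hxV : x₀ ∈ V)
    (hg : ContDiffOn ℝ 2 g V) (hd0 : deriv g x₀ = 0) :
    Tendsto (fun x : ℝ => (g x - g x₀) / (x - x₀) ^ 2) (𝓝[≠] x₀)
      (𝓝 (deriv (deriv g) x₀ / 2)) := by
  have hVnx : V ∈ 𝓝 x₀ := hVo.mem_nhds hxV
  have hdg : ContDiffOn ℝ 1 (deriv g) V := hg.deriv_of_isOpen hVo (by norm_num)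
  have hdiffg : ∀ᶠ x in 𝓝 x₀, DifferentiableAt ℝ g x := by
    filter_upwards [hVo.eventually_mem hxV] with x hx
    exact (hg.contDiffAt (hVo.mem_nhds hx)).differentiableAt (by norm_num)
  have hdd : HasDerivAt (deriv g) (deriv (deriv g) x₀) x₀ :=
    ((hdg.contDiffAt hVnx).differentiableAt (by norm_num)).hasDerivAt
  have hslope : Tendsto (slope (deriv g) x₀) (𝓝[≠] x₀) (𝓝 (deriv (deriv g) x₀)) :=
    hasDerivAt_iff_tendsto_slope.1 hdd
  have hcont : ContinuousAt g x₀ := (hg.contDiffAt hVnx).continuousAt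
  apply HasDerivAt.lhopital_zero_nhdsNE
    (f' := fun x => deriv g x) (g' := fun x => 2 * (x - x₀))
  · filter_upwards [eventually_nhdsWithin_of_eventually_nhds hdiffg] with x hx
    exact (hx.hasDerivAt).sub_const (g x₀)
  · refine Eventually.of_forall fun x => ?_
    have : HasDerivAt (fun x => (x - x₀) ^ 2) (2 * (x - x₀) ^ 1 * 1) x :=
      (((hasDerivAt_id x).sub_const x₀)).pow 2
    simpa using this
  · filter_upwards [self_mem_nhdsWithin] with x hx
    simp only [mem_compl_iff, mem_singleton_iff] at hx
    intro h
    exact hx (by linarith [sub_eq_zero.mp (by linarith : x - x₀ = 0)])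
  · have : Tendsto (fun x => g x - g x₀) (𝓝 x₀) (𝓝 (g x₀ - g x₀)) :=
      (hcont.tendsto).sub tendsto_const_nhds
    simpa using this.mono_left nhdsWithin_le_nhds
  · have : Tendsto (fun x : ℝ => (x - x₀) ^ 2) (𝓝 x₀) (𝓝 ((x₀ - x₀) ^ 2)) :=
      ((continuous_id.sub continuous_const).pow 2).tendsto x₀
    simpa using this.mono_left nhdsWithin_le_nhds
  · have h2 : Tendsto (fun x => slope (deriv g) x₀ x / 2) (𝓝[≠] x₀)
        (𝓝 (deriv (deriv g) x₀ / 2)) := hslope.div_const 2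
    refine h2.congr' ?_
    filter_upwards [self_mem_nhdsWithin] with x hx
    have hxne : x - x₀ ≠ 0 := sub_ne_zero.2 hx
    rw [slope_def_field]
    rw [hd0, sub_zero]
    rw [div_div]
    congr 1
    ring


lemma laplace_key (a b x₀ : ℝ) (hab : a < b) (hx₀ : x₀ ∈ Set.Ioo a b) (f g : ℝ → ℝ)
    (hf : ContDiffOn ℝ (⊤ : ℕ∞) f (Set.Icc a b)) (hg : ContDiffOn ℝ (⊤ : ℕ∞) g (Set.Icc a b))
    (hmax : ∀ x ∈ Set.Icc a b, x ≠ x₀ → g x < g x₀)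
    (hg'' : deriv (deriv g) x₀ < 0) :
    Tendsto (fun lam : ℝ => Real.sqrt lam * ∫ x in a..b, f x * Real.exp (lam * (g x - g x₀)))
      atTop (𝓝 (f x₀ * Real.sqrt (2 * Real.pi / (-(deriv (deriv g) x₀))))) := by
  set A : ℝ := -(deriv (deriv g) x₀) with hAdef
  have hA : 0 < A := neg_pos.2 hg''
  have hIccN : Set.Icc a b ∈ 𝓝 x₀ := Icc_mem_nhds hx₀.1 hx₀.2
  -- first derivative vanishes
  have hd0 : deriv g x₀ = 0 := by
    apply IsLocalMax.deriv_eq_zero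
    filter_upwards [hIccN] with x hx
    rcases eq_or_ne x x₀ with h | h
    · simp [h]
    · exact (hmax x hx h).le
  -- Taylor ratio limit in u
  have htayx := slope_sq_tendsto g x₀ (Set.Ioo a b) isOpen_Ioo hx₀
    ((hg.of_le (by exact WithTop.coe_le_coe.2 le_top)).mono Set.Ioo_subset_Icc_self) hd0
  have hval : deriv (deriv g) x₀ / 2 = -(A / 2) := by rw [hAdef]; ring
  rw [hval] at htayx
  have hmap : Tendsto (fun u : ℝ => x₀ + u) (𝓝[≠] (0:ℝ)) (𝓝[≠] x₀) := by
    rw [tendsto_nhdsWithin_iff]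
    constructor
    · have h := ((continuous_const.add continuous_id).tendsto (0:ℝ) :
        Tendsto (fun u : ℝ => x₀ + u) (𝓝 0) (𝓝 (x₀ + 0)))
      have h' : Tendsto (fun u : ℝ => x₀ + u) (𝓝 0) (𝓝 x₀) := by convert h using 2 <;> simp
      exact h'.mono_left nhdsWithin_le_nhds
    · filter_upwards [self_mem_nhdsWithin] with u hu
      simpa using hu
  have htay : Tendsto (fun u : ℝ => (g (x₀ + u) - g x₀) / u ^ 2) (𝓝[≠] (0:ℝ))
      (𝓝 (-(A / 2))) := by
    have := htayx.comp hmap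
    refine this.congr fun u => ?_
    simp [Function.comp]
  -- the quadratic bound near 0
  obtain ⟨δ, hδpos, hδab, hδquad⟩ :
      ∃ δ : ℝ, 0 < δ ∧ (∀ u : ℝ, |u| ≤ δ → x₀ + u ∈ Set.Icc a b) ∧
        (∀ u : ℝ, |u| ≤ δ → g (x₀ + u) - g x₀ ≤ -(A/4) * u ^ 2) := by
    have hev : ∀ᶠ u in 𝓝[≠] (0:ℝ), (g (x₀ + u) - g x₀) / u ^ 2 < -(A/4) :=
      htay.eventually_lt_const (by linarith)
    rw [eventually_nhdsWithin_iff, Metric.eventually_nhds_iff] at hev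
    obtain ⟨ε, hε, hevb⟩ := hev
    refine ⟨min (ε/2) (min (x₀ - a) (b - x₀)),
      lt_min (by linarith) (lt_min (by linarith [hx₀.1]) (by linarith [hx₀.2])), ?_, ?_⟩
    · intro u hu
      rw [abs_le] at hu
      have h1 : min (ε/2) (min (x₀ - a) (b - x₀)) ≤ x₀ - a :=
        le_trans (min_le_right _ _) (min_le_left _ _)
      have h2 : min (ε/2) (min (x₀ - a) (b - x₀)) ≤ b - x₀ :=
        le_trans (min_le_right _ _) (min_le_right _ _)
      constructor <;> [linarith [hu.1]; linarith [hu.2]]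
    · intro u hu
      rcases eq_or_ne u 0 with h0 | h0
      · simp [h0]
      · have hd : dist u 0 < ε := by
          rw [Real.dist_eq, sub_zero]
          have : min (ε/2) (min (x₀ - a) (b - x₀)) ≤ ε/2 := min_le_left _ _
          calc |u| ≤ ε/2 := le_trans hu this
          _ < ε := by linarith
        have := hevb hd (by simpa using h0)
        have hu2' : (0:ℝ) < u ^ 2 :=
          lt_of_le_of_ne (sq_nonneg u) (Ne.symm (pow_ne_zero 2 h0))
        rw [div_lt_iff₀ hu2'] at this
        nlinarith
  -- the gap away from x₀
  obtain ⟨ε₂, hε₂pos, hε₂⟩ :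
      ∃ ε₂ : ℝ, 0 < ε₂ ∧ ∀ x ∈ Set.Icc a b, δ ≤ |x - x₀| → g x - g x₀ ≤ -ε₂ := by
    by_cases hKne : (Set.Icc a b ∩ {x | δ ≤ |x - x₀|}).Nonempty
    · have hKc : IsCompact (Set.Icc a b ∩ {x | δ ≤ |x - x₀|}) :=
        isCompact_Icc.inter_right
          (isClosed_le continuous_const ((continuous_id.sub continuous_const).abs))
      obtain ⟨z, hzK, hz⟩ := hKc.exists_isMaxOn hKne
        (hg.continuousOn.mono Set.inter_subset_left)
      have hzne : z ≠ x₀ := by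
        intro h
        have := hzK.2
        rw [h] at this
        simp only [Set.mem_setOf_eq, sub_self, abs_zero] at this
        linarith
      refine ⟨g x₀ - g z, by linarith [hmax z hzK.1 hzne], ?_⟩
      intro x hx hdx
      have := hz ⟨hx, hdx⟩
      simp only [Set.mem_setOf_eq] at this
      linarith
    · refine ⟨1, one_pos, fun x hx hdx => ?_⟩
      exact (hKne ⟨x, ⟨hx, hdx⟩⟩).elim
  -- bound on f
  obtain ⟨M, hM⟩ := isCompact_Icc.exists_bound_of_continuousOn hf.continuousOn
  have hM0 : 0 ≤ M := le_trans (norm_nonneg _) (hM a (Set.left_mem_Icc.2 hab.le))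
  set c' : ℝ := min (A/4) (ε₂ / (b-a)^2) with hc'def
  have hc' : 0 < c' := lt_min (by linarith) (div_pos hε₂pos (pow_pos (by linarith) 2))
  set H : ℝ → ℝ → ℝ := fun lam t =>
    f (x₀ + t / Real.sqrt lam) * Real.exp (lam * (g (x₀ + t / Real.sqrt lam) - g x₀)) with hHdef
  set F : ℝ → ℝ → ℝ := fun lam =>
    (Set.Ioc ((a - x₀) * Real.sqrt lam) ((b - x₀) * Real.sqrt lam)).indicator (H lam) with hFdef
  have hsq : Tendsto Real.sqrt atTop atTop := by
    refine tendsto_atTop.2 fun c => ?_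
    filter_upwards [eventually_ge_atTop (max 0 (c^2))] with x hx
    calc c ≤ |c| := le_abs_self c
    _ = Real.sqrt (c^2) := (Real.sqrt_sq_eq_abs c).symm
    _ ≤ Real.sqrt x := Real.sqrt_le_sqrt (le_trans (le_max_right _ _) hx)
  -- membership fact
  have hmem : ∀ lam : ℝ, 0 < lam → ∀ t ∈ Set.Ioc ((a - x₀) * Real.sqrt lam)
      ((b - x₀) * Real.sqrt lam), x₀ + t / Real.sqrt lam ∈ Set.Icc a b ∧
      |t / Real.sqrt lam| ≤ b - a := by
    intro lam hlam t ht
    have hs : 0 < Real.sqrt lam := Real.sqrt_pos.2 hlam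
    obtain ⟨ht1, ht2⟩ := ht
    have h1 : a - x₀ < t / Real.sqrt lam := by
      rw [lt_div_iff₀ hs]; linarith
    have h2 : t / Real.sqrt lam ≤ b - x₀ := by
      rw [div_le_iff₀ hs]; linarith
    have hx1 := hx₀.1; have hx2 := hx₀.2
    constructor
    · constructor <;> [linarith; linarith]
    · rw [abs_le]; constructor <;> linarith
  -- dominated convergence
  have hDCT : Tendsto (fun lam => ∫ t : ℝ, F lam t) atTop
      (𝓝 (∫ t : ℝ, f x₀ * Real.exp (-(A/2) * t ^ 2))) := by
    apply MeasureTheory.tendsto_integral_filter_of_dominated_convergence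
      (bound := fun t => M * Real.exp (-c' * t ^ 2))
    · -- measurability
      filter_upwards [eventually_gt_atTop (0:ℝ)] with lam hlam
      have hFeq : F lam = (Set.Ioc ((a - x₀) * Real.sqrt lam)
          ((b - x₀) * Real.sqrt lam)).indicator (H lam) := rfl
      rw [hFeq, aestronglyMeasurable_indicator_iff measurableSet_Ioc]
      apply ContinuousOn.aestronglyMeasurable ?_ measurableSet_Ioc
      have hcφ : Continuous (fun t : ℝ => x₀ + t / Real.sqrt lam) := by continuity
      have hmaps : Set.MapsTo (fun t : ℝ => x₀ + t / Real.sqrt lam)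
          (Set.Ioc ((a - x₀) * Real.sqrt lam) ((b - x₀) * Real.sqrt lam)) (Set.Icc a b) :=
        fun t ht => (hmem lam hlam t ht).1
      exact (hf.continuousOn.comp hcφ.continuousOn hmaps).mul
        (Real.continuous_exp.comp_continuousOn
          (continuousOn_const.mul
            ((hg.continuousOn.comp hcφ.continuousOn hmaps).sub continuousOn_const)))
    · -- bound
      filter_upwards [eventually_gt_atTop (0:ℝ)] with lam hlam
      refine Eventually.of_forall fun t => ?_
      by_cases ht : t ∈ Set.Ioc ((a - x₀) * Real.sqrt lam) ((b - x₀) * Real.sqrt lam)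
      · have hFt : F lam t = H lam t := Set.indicator_of_mem ht _
        rw [hFt]
        obtain ⟨hxmem, hub⟩ := hmem lam hlam t ht
        have hsl : 0 < Real.sqrt lam := Real.sqrt_pos.2 hlam
        have hu2 : lam * (t / Real.sqrt lam) ^ 2 = t ^ 2 := by
          rw [div_pow, Real.sq_sqrt hlam.le]
          field_simp
        have hexp : lam * (g (x₀ + t / Real.sqrt lam) - g x₀) ≤ -c' * t ^ 2 := by
          rcases le_or_gt |t / Real.sqrt lam| δ with hcase | hcase
          · have h1 := hδquad _ hcase
            have h2 : lam * (g (x₀ + t / Real.sqrt lam) - g x₀)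
                ≤ lam * (-(A/4) * (t / Real.sqrt lam) ^ 2) :=
              mul_le_mul_of_nonneg_left h1 hlam.le
            have h3 : lam * (-(A/4) * (t / Real.sqrt lam) ^ 2) = -(A/4) * t ^ 2 := by
              rw [← hu2]; ring
            have h4 : c' ≤ A/4 := min_le_left _ _
            nlinarith [sq_nonneg t]
          · have hxK := hε₂ (x₀ + t / Real.sqrt lam) hxmem
              (by rw [add_sub_cancel_left]; exact hcase.le)
            have h2 : lam * (g (x₀ + t / Real.sqrt lam) - g x₀) ≤ lam * (-ε₂) :=
              mul_le_mul_of_nonneg_left hxK hlam.le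
            have h3 : t ^ 2 ≤ lam * (b - a) ^ 2 := by
              rw [← hu2]
              have h5 : (t / Real.sqrt lam) ^ 2 ≤ (b - a) ^ 2 :=
                sq_le_sq' (by linarith [(abs_le.1 hub).1]) (abs_le.1 hub).2
              nlinarith
            have h4 : c' ≤ ε₂ / (b-a)^2 := min_le_right _ _
            have hba : (0:ℝ) < (b-a)^2 := pow_pos (by linarith) 2
            have h5 : c' * t^2 ≤ lam * ε₂ := by
              calc c' * t^2 ≤ (ε₂/(b-a)^2) * t^2 := by nlinarith [sq_nonneg t]
              _ ≤ (ε₂/(b-a)^2) * (lam * (b-a)^2) :=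
                  mul_le_mul_of_nonneg_left h3 (by positivity)
              _ = lam * ε₂ := by rw [mul_comm lam, ← mul_assoc, div_mul_cancel₀ _ hba.ne']; ring
            linarith
        simp only [hHdef]
        rw [norm_mul, Real.norm_eq_abs, Real.norm_eq_abs, Real.abs_exp]
        have hMf := hM _ hxmem
        rw [Real.norm_eq_abs] at hMf
        exact mul_le_mul hMf (Real.exp_le_exp.2 hexp) (Real.exp_pos _).le hM0
      · have hFt : F lam t = 0 := Set.indicator_of_notMem ht _
        rw [hFt]
        simp only [norm_zero]
        positivity
    · exact (integrable_exp_neg_mul_sq hc').const_mul M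
    · -- pointwise limit
      refine Eventually.of_forall fun t => ?_
      have hl : Tendsto (fun lam : ℝ => (a - x₀) * Real.sqrt lam) atTop atBot :=
        (tendsto_const_mul_atBot_of_neg (by linarith [hx₀.1])).2 hsq
      have hr : Tendsto (fun lam : ℝ => (b - x₀) * Real.sqrt lam) atTop atTop :=
        (tendsto_const_mul_atTop_of_pos (by linarith [hx₀.2])).2 hsq
      have hev : ∀ᶠ lam in atTop, H lam t = F lam t := by
        filter_upwards [hl.eventually (eventually_lt_atBot t),
          hr.eventually (eventually_ge_atTop t)] with lam h1 h2
        have hmemt : t ∈ Set.Ioc ((a - x₀) * Real.sqrt lam) ((b - x₀) * Real.sqrt lam) :=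
          ⟨h1, h2⟩
        exact (Set.indicator_of_mem hmemt (H lam)).symm
      have hu : Tendsto (fun lam : ℝ => t / Real.sqrt lam) atTop (𝓝 0) :=
        tendsto_const_nhds.div_atTop hsq
      have hxten : Tendsto (fun lam : ℝ => x₀ + t / Real.sqrt lam) atTop (𝓝 x₀) := by
        have h := (tendsto_const_nhds : Tendsto (fun _ : ℝ => x₀) atTop (𝓝 x₀)).add hu
        simpa using h
      have hfed : Tendsto (fun lam : ℝ => f (x₀ + t / Real.sqrt lam)) atTop (𝓝 (f x₀)) :=
        ((hf.continuousOn.continuousAt hIccN).tendsto).comp hxten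
      have harg : Tendsto (fun lam : ℝ => lam * (g (x₀ + t / Real.sqrt lam) - g x₀))
          atTop (𝓝 (-(A/2) * t ^ 2)) := by
        rcases eq_or_ne t 0 with ht0 | ht0
        · subst ht0
          have heq : (fun lam : ℝ => lam * (g (x₀ + (0:ℝ) / Real.sqrt lam) - g x₀))
              = fun _ : ℝ => (0:ℝ) := by
            funext lam; simp
          rw [heq]
          simpa using (tendsto_const_nhds : Tendsto (fun _ : ℝ => (0:ℝ)) atTop (𝓝 0))
        · have hu' : Tendsto (fun lam : ℝ => t / Real.sqrt lam) atTop (𝓝[≠] (0:ℝ)) := by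
            rw [tendsto_nhdsWithin_iff]
            refine ⟨hu, ?_⟩
            filter_upwards [eventually_gt_atTop (0:ℝ)] with lam hlam
            have hsl : 0 < Real.sqrt lam := Real.sqrt_pos.2 hlam
            simp only [Set.mem_compl_iff, Set.mem_singleton_iff]
            exact div_ne_zero ht0 hsl.ne'
          have hcomp := htay.comp hu'
          have hmul := hcomp.const_mul (t ^ 2)
          rw [show t ^ 2 * -(A/2) = -(A/2) * t ^ 2 from by ring] at hmul
          refine hmul.congr' ?_
          filter_upwards [eventually_gt_atTop (0:ℝ)] with lam hlam
          have hsl : 0 < Real.sqrt lam := Real.sqrt_pos.2 hlam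
          have hu2 : (t / Real.sqrt lam) ^ 2 = t ^ 2 / lam := by
            rw [div_pow, Real.sq_sqrt hlam.le]
          simp only [Function.comp]
          rw [hu2]
          field_simp
      have hexp : Tendsto (fun lam : ℝ => Real.exp (lam * (g (x₀ + t / Real.sqrt lam) - g x₀)))
          atTop (𝓝 (Real.exp (-(A/2) * t ^ 2))) :=
        (Real.continuous_exp.tendsto _).comp harg
      exact (hfed.mul hexp).congr' hev
  have hgauss : (∫ t : ℝ, f x₀ * Real.exp (-(A/2) * t ^ 2))
      = f x₀ * Real.sqrt (2 * Real.pi / A) := by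
    rw [MeasureTheory.integral_const_mul, integral_gaussian]
    congr 2
    rw [div_div_eq_mul_div]
    ring
  rw [hgauss] at hDCT
  refine hDCT.congr' ?_
  filter_upwards [eventually_gt_atTop (0:ℝ)] with lam hlam
  have hsl : 0 < Real.sqrt lam := Real.sqrt_pos.2 hlam
  have hle : (a - x₀) * Real.sqrt lam ≤ (b - x₀) * Real.sqrt lam := by nlinarith
  have h1 : (∫ t : ℝ, F lam t)
      = ∫ t in Set.Ioc ((a-x₀)*Real.sqrt lam) ((b-x₀)*Real.sqrt lam), H lam t := by
    have hFeq : F lam = (Set.Ioc ((a - x₀) * Real.sqrt lam)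
        ((b - x₀) * Real.sqrt lam)).indicator (H lam) := rfl
    rw [hFeq]
    exact MeasureTheory.integral_indicator measurableSet_Ioc
  have h3 : (∫ x in a..b, f x * Real.exp (lam * (g x - g x₀)))
      = ∫ x in a..b, (fun y => H lam (y * Real.sqrt lam)) (x - x₀) := by
    apply intervalIntegral.integral_congr
    intro x _
    simp only [hHdef]
    have hx : x₀ + ((x - x₀) * Real.sqrt lam) / Real.sqrt lam = x := by
      field_simp
      ring
    rw [hx]
  have h5 : (∫ x in a..b, (fun y => H lam (y * Real.sqrt lam)) (x - x₀))
      = ∫ x in (a - x₀)..(b - x₀), H lam (x * Real.sqrt lam) :=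
    intervalIntegral.integral_comp_sub_right (fun y => H lam (y * Real.sqrt lam)) x₀
  have h4 : (∫ x in (a - x₀)..(b - x₀), H lam (x * Real.sqrt lam))
      = (Real.sqrt lam)⁻¹ • ∫ t in ((a-x₀)*Real.sqrt lam)..((b-x₀)*Real.sqrt lam), H lam t :=
    intervalIntegral.integral_comp_mul_right (H lam) hsl.ne'
  rw [h1, ← intervalIntegral.integral_of_le hle, h3, h5, h4, smul_eq_mul]
  rw [← mul_assoc, mul_inv_cancel₀ hsl.ne', one_mul]

open Asymptotics in
/-- Laplace's method, interior-point case. If `f, g` are smooth on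
`[a,b]`, `g` attains its maximum on `[a,b]` only at an interior point `x₀ ∈ (a,b)` with
`g''(x₀) < 0`, and `f(x₀) ≠ 0`, then as `λ → +∞`,
`∫_a^b f(x) e^{λ g(x)} dx ∼ f(x₀) e^{λ g(x₀)} √(2π/(λ(-g''(x₀))))`. -/
theorem stmt18 (a b x₀ : ℝ) (hab : a < b) (hx₀ : x₀ ∈ Set.Ioo a b) (f g : ℝ → ℝ)
    (hf : ContDiffOn ℝ (⊤ : ℕ∞) f (Set.Icc a b)) (hg : ContDiffOn ℝ (⊤ : ℕ∞) g (Set.Icc a b))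
    (hmax : ∀ x ∈ Set.Icc a b, x ≠ x₀ → g x < g x₀)
    (hg'' : deriv (deriv g) x₀ < 0)
    (hfx₀ : f x₀ ≠ 0) :
    (fun lam : ℝ => ∫ x in a..b, f x * Real.exp (lam * g x)) ~[atTop]
      (fun lam : ℝ =>
        f x₀ * Real.exp (lam * g x₀) *
          Real.sqrt (2 * Real.pi / (lam * (-(deriv (deriv g) x₀))))) := by
  have hA : 0 < -(deriv (deriv g) x₀) := neg_pos.2 hg''
  have hkey := laplace_key a b x₀ hab hx₀ f g hf hg hmax hg''
  set L : ℝ := f x₀ * Real.sqrt (2 * Real.pi / (-(deriv (deriv g) x₀))) with hL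
  have hLne : L ≠ 0 := mul_ne_zero hfx₀ (Real.sqrt_ne_zero'.2 (by positivity))
  apply Asymptotics.isEquivalent_of_tendsto_one
  · have h2 := hkey.div_const L
    rw [div_self hLne] at h2
    refine Tendsto.congr' ?_ h2
    filter_upwards [eventually_gt_atTop (0:ℝ)] with lam hlam
    have hsl : 0 < Real.sqrt lam := Real.sqrt_pos.2 hlam
    have hInt : (∫ x in a..b, f x * Real.exp (lam * g x))
        = Real.exp (lam * g x₀) * ∫ x in a..b, f x * Real.exp (lam * (g x - g x₀)) := by
      rw [← intervalIntegral.integral_const_mul]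
      apply intervalIntegral.integral_congr
      intro x _
      simp only
      rw [show lam * (g x - g x₀) = lam * g x - lam * g x₀ by ring, Real.exp_sub]
      field_simp
    have hsqrt : Real.sqrt (2 * Real.pi / (lam * (-(deriv (deriv g) x₀))))
        = Real.sqrt (2 * Real.pi / (-(deriv (deriv g) x₀))) / Real.sqrt lam := by
      rw [show 2 * Real.pi / (lam * (-(deriv (deriv g) x₀)))
          = (2 * Real.pi / (-(deriv (deriv g) x₀))) / lam by field_simp]
      exact Real.sqrt_div (by positivity) lam
    simp only [Pi.div_apply]
    rw [hInt, hsqrt, hL]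
    have hexp := Real.exp_ne_zero (lam * g x₀)
    have hsq2 : Real.sqrt (2 * Real.pi / (-(deriv (deriv g) x₀))) ≠ 0 :=
      Real.sqrt_ne_zero'.2 (by positivity)
    field_simp
end
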